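/- arXiv:1601.04679 — 5 statements merged into one kernel-verified Lean document; each statement's English description precedes it below -/
import Mathlib

section
/- For fixed positive reals t₁ ≤ t₂, the limit as n → ∞ of (1/(n log n)) · ∑_{k=1}^{⌊n t₁⌋} ∑_{ℓ=1}^{⌊n t₂⌋} 1/(|k-ℓ|+1) equals 2 t₁ = 2 min(t₁, t₂). -/
/-!
Row `k` of the double sum splits at `ℓ = k` into two sums of harmonic type, giving
`H k + H (b + 1 - k) - 1` with `H` the harmonic numbers. So for `a ≤ b` the sum is squeezed
between its diagonal block, which sums to `2 (a + 1) H a - 3 a`, and `2 a H b`. With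
`a = ⌊n t₁⌋`, `b = ⌊n t₂⌋` and `H m = log m + O(1)`, both bounds are `2 n t₁ log n + O(n)`.
-/

open Finset Filter Real

theorem sum_Icc_natAbs_sub {M : Type*} [AddCommGroup M] (f : ℕ → M) {k b : ℕ}
    (hkb : k ≤ b) :
    ∑ ℓ ∈ Icc 1 b, f ((k : ℤ) - ℓ).natAbs =
      ∑ i ∈ range k, f i + ∑ i ∈ range (b + 1 - k), f i - f 0 := by
  induction b, hkb using Nat.le_induction with
  | base =>
    have hdiag : ∑ ℓ ∈ Icc 1 k, f ((k : ℤ) - ℓ).natAbs = ∑ i ∈ range k, f i := by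
      refine sum_nbij' (fun ℓ ↦ k - ℓ) (fun i ↦ k - i) ?_ ?_ ?_ ?_ ?_ <;> intro i hi <;>
        simp only [mem_Icc, mem_range] at hi ⊢
      all_goals first | omega | (congr 1; omega)
    simp [hdiag, show k + 1 - k = 1 by omega]
  | succ b hkb ih =>
    rw [sum_Icc_succ_top (by omega), ih, show b + 1 + 1 - k = b + 1 - k + 1 by omega,
      sum_range_succ, show ((k : ℤ) - (b + 1 : ℕ)).natAbs = b + 1 - k by omega]
    abel

theorem sum_Icc_reflect {M : Type*} [AddCommMonoid M] (f : ℕ → M) (a : ℕ) :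
    ∑ k ∈ Icc 1 a, f (a + 1 - k) = ∑ k ∈ Icc 1 a, f k :=
  sum_nbij' (fun k ↦ a + 1 - k) (fun k ↦ a + 1 - k) (by grind) (by grind) (by grind) (by grind)
    fun _ _ ↦ rfl

theorem harmonic_eq_sum_range_one_div (n : ℕ) :
    (harmonic n : ℝ) = ∑ i ∈ range n, 1 / ((i : ℝ) + 1) := by
  simp [harmonic, one_div]

theorem monotone_harmonic : Monotone harmonic :=
  monotone_nat_of_le_succ fun n ↦ by rw [harmonic_succ, le_add_iff_nonneg_right]; positivity

theorem sum_Icc_harmonic (a : ℕ) : ∑ k ∈ Icc 1 a, harmonic k = (a + 1) * harmonic a - a := by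
  induction a with
  | zero => simp
  | succ a ih =>
    rw [sum_Icc_succ_top (by omega), ih, harmonic_succ]
    push_cast
    field_simp
    ring

noncomputable def recipDistSum (a b : ℕ) : ℝ :=
  ∑ k ∈ Icc 1 a, ∑ ℓ ∈ Icc 1 b, 1 / ((((k : ℤ) - ℓ).natAbs : ℝ) + 1)

theorem sum_Icc_one_div_natAbs_sub_add_one {k b : ℕ} (hkb : k ≤ b) :
    ∑ ℓ ∈ Icc 1 b, 1 / ((((k : ℤ) - ℓ).natAbs : ℝ) + 1) =
      harmonic k + harmonic (b + 1 - k) - 1 := by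
  have := sum_Icc_natAbs_sub (fun i : ℕ ↦ 1 / ((i : ℝ) + 1)) hkb
  simp only [CharP.cast_eq_zero, zero_add, div_one] at this
  rw [this, harmonic_eq_sum_range_one_div, harmonic_eq_sum_range_one_div]

theorem recipDistSum_eq_sum_harmonic {a b : ℕ} (hab : a ≤ b) :
    recipDistSum a b = ∑ k ∈ Icc 1 a, ((harmonic k : ℝ) + harmonic (b + 1 - k) - 1) :=
  sum_congr rfl fun _ hk ↦ sum_Icc_one_div_natAbs_sub_add_one (by grind)

theorem recipDistSum_le {a b : ℕ} (hab : a ≤ b) : recipDistSum a b ≤ 2 * a * harmonic b := by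
  rw [recipDistSum_eq_sum_harmonic hab]
  calc _ ≤ ∑ k ∈ Icc 1 a, (2 * harmonic b : ℝ) := by
        refine sum_le_sum fun k hk ↦ ?_
        have h₁ : (harmonic k : ℝ) ≤ harmonic b := mod_cast monotone_harmonic (by grind)
        have h₂ : (harmonic (b + 1 - k) : ℝ) ≤ harmonic b := mod_cast monotone_harmonic (by grind)
        linarith
    _ = 2 * a * harmonic b := by
      simp only [sum_const, Nat.card_Icc, add_tsub_cancel_right, nsmul_eq_mul]; ring

theorem recipDistSum_self (a : ℕ) : recipDistSum a a = 2 * (a + 1) * harmonic a - 3 * a := by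
  rw [recipDistSum_eq_sum_harmonic le_rfl, sum_sub_distrib, sum_add_distrib,
    sum_Icc_reflect (fun k ↦ (harmonic k : ℝ)), ← Rat.cast_sum, sum_Icc_harmonic]
  push_cast
  simp only [sum_const, Nat.card_Icc, add_tsub_cancel_right, nsmul_eq_mul, mul_one]
  ring

theorem le_recipDistSum {a b : ℕ} (hab : a ≤ b) :
    2 * (a + 1) * harmonic a - 3 * a ≤ recipDistSum a b :=
  recipDistSum_self a ▸ sum_le_sum fun _ _ ↦
    sum_le_sum_of_subset_of_nonneg (Icc_subset_Icc_right hab) fun _ _ _ ↦ by positivity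

theorem le_recipDistSum_of_le_add_one {a b : ℕ} {y : ℝ} (hab : a ≤ b) (hy : 0 < y)
    (hya : y ≤ a + 1) : a * (2 * log y - 3) ≤ recipDistSum a b := by
  have hlog : log y ≤ harmonic a :=
    (log_le_log hy (by exact_mod_cast hya)).trans (mod_cast log_add_one_le_harmonic a)
  have hH : (0 : ℝ) ≤ harmonic a := by
    rw [harmonic_eq_sum_range_one_div]; positivity
  nlinarith [le_recipDistSum hab, (Nat.cast_nonneg a : (0 : ℝ) ≤ a)]

theorem recipDistSum_le_of_le {a b : ℕ} {y : ℝ} (hab : a ≤ b) (hby : b ≤ y) :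
    recipDistSum a b ≤ 2 * a * (1 + log y) := by
  rcases Nat.eq_zero_or_pos a with rfl | ha
  · simp [recipDistSum]
  have hb : (0 : ℝ) < b := by exact_mod_cast ha.trans_le hab
  have hH : (harmonic b : ℝ) ≤ 1 + log y :=
    (harmonic_le_one_add_log b).trans (by gcongr)
  calc recipDistSum a b ≤ 2 * a * harmonic b := recipDistSum_le hab
    _ ≤ 2 * a * (1 + log y) := by gcongr

theorem tendsto_one_div_mul_log_mul_of_bounds {A : ℕ → ℕ} {u : ℕ → ℝ} {t α c C : ℝ}
    (hA : Tendsto (fun n ↦ (A n : ℝ) / n) atTop (nhds t))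
    (hlow : ∀ᶠ n in atTop, A n * (α * log n - c) ≤ u n)
    (hup : ∀ᶠ n in atTop, u n ≤ A n * (α * log n + C)) :
    Tendsto (fun n : ℕ ↦ 1 / (n * log n) * u n) atTop (nhds (α * t)) := by
  have hlog : Tendsto (fun n : ℕ ↦ log n) atTop atTop :=
    tendsto_log_atTop.comp tendsto_natCast_atTop_atTop
  have hlim (d : ℝ) : Tendsto (fun n ↦ A n / n * (α + d / log n)) atTop (nhds (α * t)) := by
    simpa [mul_comm] using hA.mul (tendsto_const_nhds.add (tendsto_const_nhds.div_atTop hlog))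
  have hrewrite : ∀ᶠ n : ℕ in atTop, ∀ d, A n / n * (α + d / log n) =
      1 / (n * log n) * (A n * (α * log n + d)) := by
    filter_upwards [eventually_gt_atTop 1] with n hn d
    have : 0 < log n := log_pos (by exact_mod_cast hn)
    have : (0 : ℝ) < n := by positivity
    field_simp
  refine tendsto_of_tendsto_of_tendsto_of_le_of_le' (hlim (-c)) (hlim C) ?_ ?_
  · filter_upwards [hlow, hrewrite] with n hn hn'
    rw [hn', ← sub_eq_add_neg]
    exact mul_le_mul_of_nonneg_left hn (by positivity)
  · filter_upwards [hup, hrewrite] with n hn hn'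
    rw [hn']
    exact mul_le_mul_of_nonneg_left hn (by positivity)

theorem double_sum_reciprocal_limit (t₁ t₂ : ℝ) (ht₁ : 0 < t₁) (h12 : t₁ ≤ t₂) :
    Tendsto (fun n : ℕ =>
      (1 / (n * Real.log n)) *
        ∑ k ∈ Finset.Icc 1 ⌊(n : ℝ) * t₁⌋₊, ∑ ℓ ∈ Finset.Icc 1 ⌊(n : ℝ) * t₂⌋₊,
          (1 : ℝ) / ((((k : ℤ) - ℓ).natAbs : ℝ) + 1))
      atTop (nhds (2 * t₁)) := by
  have ht₂ : 0 < t₂ := ht₁.trans_le h12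
  have hA : Tendsto (fun n : ℕ ↦ (⌊(n : ℝ) * t₁⌋₊ : ℝ) / n) atTop (nhds t₁) := by
    simpa [Function.comp_def, mul_comm] using
      (tendsto_nat_floor_mul_div_atTop ht₁.le).comp tendsto_natCast_atTop_atTop
  refine tendsto_one_div_mul_log_mul_of_bounds (u := fun n ↦ recipDistSum _ _) hA
    (c := 3 - 2 * Real.log t₁) (C := 2 + 2 * Real.log t₂) ?_ ?_
  · filter_upwards [eventually_gt_atTop 0] with n (hn : 0 < n)
    have hn₀ : (0 : ℝ) < n := mod_cast hn
    have hlow := le_recipDistSum_of_le_add_one (b := ⌊(n : ℝ) * t₂⌋₊)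
      (Nat.floor_mono (by gcongr)) (by positivity) (Nat.lt_floor_add_one ((n : ℝ) * t₁)).le
    rw [Real.log_mul hn₀.ne' ht₁.ne'] at hlow
    linear_combination hlow
  · filter_upwards [eventually_gt_atTop 0] with n (hn : 0 < n)
    have hn₀ : (0 : ℝ) < n := mod_cast hn
    have hup := recipDistSum_le_of_le (a := ⌊(n : ℝ) * t₁⌋₊) (b := ⌊(n : ℝ) * t₂⌋₊)
      (Nat.floor_mono (by gcongr)) (Nat.floor_le (by positivity))
    rw [Real.log_mul hn₀.ne' ht₂.ne'] at hup
    linear_combination hup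
end

section
/- Let ψ : [0,1) → [0,∞) be integrable with lim_{x↑1} ψ(x) = ψ₁ ∈ (0,∞). Then for fixed positive reals t₁, t₂, the quantity (1/(n log n)) · ∫_0^1 ∑_{k=1}^{⌊n t₁⌋} ∑_{ℓ=1}^{⌊n t₂⌋} a^{|k-ℓ|} |ψ(a) − ψ₁| da converges to 0 as n → ∞. -/
/-!
For `0 ≤ a ≤ 1` the inner sum `∑ ℓ ≤ L, a ^ |k - ℓ|` is at most `2 / (1 - a)` (two geometric
series) and at most `L`, hence at most `3 / (1 - a + 1 / (L + 1))`. So the double sum is at most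
`3 K` times the kernel `(1 - a + M⁻¹)⁻¹`, `M = L + 1`, whose integral over `[0, 1)` is
`log (M + 1)`. Against this kernel, the integrable function `φ = |ψ - ψ₁|` integrates to
`o (log M)`: on `[0, c]` the kernel is bounded by `(1 - c)⁻¹`, and on `(c, 1)` we have `φ ≤ ε`,
leaving at most `ε log (M + 1)`. As `K = O(n)` and `log M = O(log n)`, the normalised quantity
tends to `0`.
-/

open Finset Filter MeasureTheory Asymptotics Topology

lemma sum_pow_mul_one_sub_le_one {ι : Type*} {a : ℝ} (ha₀ : 0 ≤ a) (ha₁ : a ≤ 1)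
    (s : Finset ι) {g : ι → ℕ} (hg : Set.InjOn g s) :
    (∑ i ∈ s, a ^ g i) * (1 - a) ≤ 1 := by
  rw [← sum_image (f := fun j => a ^ j) hg]
  calc (∑ j ∈ s.image g, a ^ j) * (1 - a)
      ≤ (∑ j ∈ range ((s.image g).sup id).succ, a ^ j) * (1 - a) :=
        mul_le_mul_of_nonneg_right (sum_le_sum_of_subset_of_nonneg (subset_range_sup_succ _)
          fun _ _ _ => pow_nonneg ha₀ _) (sub_nonneg.2 ha₁)
    _ = 1 - a ^ ((s.image g).sup id).succ := geom_sum_mul_neg a _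
    _ ≤ 1 := sub_le_self _ (pow_nonneg ha₀ _)

lemma sum_pow_natAbs_sub_mul_one_sub_le_two {a : ℝ} (ha₀ : 0 ≤ a) (ha₁ : a ≤ 1) (k : ℕ)
    (s : Finset ℕ) : (∑ ℓ ∈ s, a ^ ((k : ℤ) - ℓ).natAbs) * (1 - a) ≤ 2 := by
  rw [← sum_filter_add_sum_filter_not s (· ≤ k), add_mul]
  have h₁ := sum_pow_mul_one_sub_le_one ha₀ ha₁ (s.filter (· ≤ k))
    (g := fun ℓ => ((k : ℤ) - ℓ).natAbs) fun x hx y hy h => by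
      simp only [coe_filter, Set.mem_ofPred_eq] at hx hy h; omega
  have h₂ := sum_pow_mul_one_sub_le_one ha₀ ha₁ (s.filter (¬ · ≤ k))
    (g := fun ℓ => ((k : ℤ) - ℓ).natAbs) fun x hx y hy h => by
      simp only [not_le, coe_filter, Set.mem_ofPred_eq] at hx hy h; omega
  linarith

lemma sum_pow_natAbs_sub_le {a : ℝ} (ha₀ : 0 ≤ a) (ha₁ : a ≤ 1) (k : ℕ) (s : Finset ℕ) :
    ∑ ℓ ∈ s, a ^ ((k : ℤ) - ℓ).natAbs ≤ 3 * (1 - a + ((#s : ℝ) + 1)⁻¹)⁻¹ := by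
  set S := ∑ ℓ ∈ s, a ^ ((k : ℤ) - ℓ).natAbs
  have hS : S ≤ #s := by
    simpa using sum_le_sum fun ℓ (_ : ℓ ∈ s) => pow_le_one₀ (n := ((k : ℤ) - ℓ).natAbs) ha₀ ha₁
  have hS' : S * ((#s : ℝ) + 1)⁻¹ ≤ 1 := by
    rw [mul_inv_le_iff₀ (by positivity)]
    linarith
  rw [le_mul_inv_iff₀ (by have := inv_pos.2 (Nat.cast_add_one_pos (α := ℝ) #s); linarith)]
  calc S * (1 - a + ((#s : ℝ) + 1)⁻¹) = S * (1 - a) + S * ((#s : ℝ) + 1)⁻¹ := by ring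
    _ ≤ 2 + 1 := add_le_add (sum_pow_natAbs_sub_mul_one_sub_le_two ha₀ ha₁ k s) hS'
    _ = 3 := by norm_num

lemma continuousOn_inv_one_sub_add_inv {M : ℝ} (hM : 0 < M) :
    ContinuousOn (fun a : ℝ => (1 - a + M⁻¹)⁻¹) (Set.Icc 0 1) :=
  ContinuousOn.inv₀ (by fun_prop) fun a ha => by
    have := inv_pos.2 hM
    linarith [ha.2]

lemma integral_inv_one_sub_add_inv {M : ℝ} (hM : 0 < M) :
    ∫ a in Set.Ico 0 1, (1 - a + M⁻¹)⁻¹ = Real.log (M + 1) := by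
  have hshift (a : ℝ) : 1 - a + M⁻¹ = (1 + M⁻¹) - a := by ring
  simp_rw [hshift]
  rw [integral_Ico_eq_integral_Ioo, ← integral_Ioc_eq_integral_Ioo,
    ← intervalIntegral.integral_of_le zero_le_one,
    intervalIntegral.integral_comp_sub_left (fun u => u⁻¹), sub_zero, add_sub_cancel_left,
    integral_inv_of_pos (by positivity) (by positivity)]
  congr 1
  field_simp

variable {φ : ℝ → ℝ}

lemma integrableOn_inv_one_sub_add_inv_mul {M : ℝ} (hM : 0 < M)
    (hφ : IntegrableOn φ (Set.Ico 0 1)) :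
    IntegrableOn (fun a => (1 - a + M⁻¹)⁻¹ * φ a) (Set.Ico 0 1) :=
  (IntegrableOn.continuousOn_mul (continuousOn_inv_one_sub_add_inv hM)
    (hφ.congr_set_ae Ico_ae_eq_Icc.symm) isCompact_Icc).mono_set Set.Ico_subset_Icc_self

lemma setIntegral_inv_one_sub_add_inv_mul_le {M c η : ℝ} (hM : 0 < M) (hc : c < 1) (hη : 0 ≤ η)
    (hφ : IntegrableOn φ (Set.Ico 0 1)) (hφ₀ : ∀ a ∈ Set.Ico (0 : ℝ) 1, 0 ≤ φ a)
    (hφη : ∀ a ∈ Set.Ioo c 1, φ a ≤ η) :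
    ∫ a in Set.Ico 0 1, (1 - a + M⁻¹)⁻¹ * φ a
      ≤ (1 - c)⁻¹ * (∫ a in Set.Ico 0 1, φ a) + η * Real.log (M + 1) := by
  have hv : IntegrableOn (fun a : ℝ => (1 - a + M⁻¹)⁻¹) (Set.Ico 0 1) :=
    (continuousOn_inv_one_sub_add_inv hM).integrableOn_Icc.mono_set Set.Ico_subset_Icc_self
  calc ∫ a in Set.Ico 0 1, (1 - a + M⁻¹)⁻¹ * φ a
      ≤ ∫ a in Set.Ico 0 1, ((1 - c)⁻¹ * φ a + η * (1 - a + M⁻¹)⁻¹) := by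
        refine setIntegral_mono_on (integrableOn_inv_one_sub_add_inv_mul hM hφ)
          ((hφ.const_mul _).add (hv.const_mul _)) measurableSet_Ico fun a ha => ?_
        have hM' := inv_pos.2 hM
        have hva : 0 ≤ (1 - a + M⁻¹)⁻¹ := inv_nonneg.2 (by linarith [ha.2])
        rcases le_or_gt a c with hac | hca
        · have hvc : (1 - a + M⁻¹)⁻¹ ≤ (1 - c)⁻¹ := inv_anti₀ (by linarith) (by linarith)
          have := mul_le_mul_of_nonneg_right hvc (hφ₀ a ha)
          have := mul_nonneg hη hva
          linarith
        · have := mul_le_mul_of_nonneg_left (hφη a ⟨hca, ha.2⟩) hva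
          have := mul_nonneg (inv_nonneg.2 (sub_nonneg.2 hc.le)) (hφ₀ a ha)
          linarith
    _ = (1 - c)⁻¹ * (∫ a in Set.Ico 0 1, φ a) + η * Real.log (M + 1) := by
        rw [integral_add (hφ.const_mul _) (hv.const_mul _), integral_const_mul, integral_const_mul,
          integral_inv_one_sub_add_inv hM]

theorem isLittleO_setIntegral_inv_one_sub_add_inv_mul (hφ : IntegrableOn φ (Set.Ico 0 1))
    (hφ₀ : ∀ a ∈ Set.Ico (0 : ℝ) 1, 0 ≤ φ a) (hlim : Tendsto φ (𝓝[<] 1) (𝓝 0)) :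
    (fun M : ℝ => ∫ a in Set.Ico 0 1, (1 - a + M⁻¹)⁻¹ * φ a) =o[atTop] Real.log := by
  refine IsLittleO.of_bound fun ε hε => ?_
  obtain ⟨c, hc, hcφ⟩ := mem_nhdsLT_iff_exists_Ioo_subset.1
    (hlim (Iic_mem_nhds (by positivity : (0 : ℝ) < ε / 4)))
  set C := (1 - c)⁻¹ * ∫ a in Set.Ico 0 1, φ a
  filter_upwards [eventually_ge_atTop 2, Real.tendsto_log_atTop.eventually_ge_atTop (2 * C / ε)]
    with M hM hlogM
  have hbound := setIntegral_inv_one_sub_add_inv_mul_le (M := M) (by linarith) hc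
    (by positivity) hφ hφ₀ fun a ha => hcφ ha
  have hF₀ : 0 ≤ ∫ a in Set.Ico 0 1, (1 - a + M⁻¹)⁻¹ * φ a :=
    setIntegral_nonneg measurableSet_Ico fun a ha =>
      mul_nonneg (inv_nonneg.2 (by have := inv_pos.2 (by linarith : (0 : ℝ) < M); linarith [ha.2]))
        (hφ₀ a ha)
  have hlog₀ : 0 ≤ Real.log M := Real.log_nonneg (by linarith)
  have hlog₂ : Real.log (M + 1) ≤ 2 * Real.log M := by
    calc Real.log (M + 1) ≤ Real.log (M ^ 2) := Real.log_le_log (by linarith) (by nlinarith)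
      _ = 2 * Real.log M := by rw [Real.log_pow]; norm_num
  rw [div_le_iff₀ hε] at hlogM
  rw [Real.norm_of_nonneg hF₀, Real.norm_of_nonneg hlog₀]
  nlinarith

lemma setIntegral_sum_sum_pow_natAbs_sub_mul_le (hφ : IntegrableOn φ (Set.Ico 0 1))
    (hφ₀ : ∀ a ∈ Set.Ico (0 : ℝ) 1, 0 ≤ φ a) (K L : ℕ) :
    ∫ a in Set.Icc (0 : ℝ) 1,
        ∑ k ∈ Finset.Icc 1 K, ∑ ℓ ∈ Finset.Icc 1 L, a ^ ((k : ℤ) - ℓ).natAbs * φ a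
      ≤ 3 * K * ∫ a in Set.Ico 0 1, (1 - a + ((L : ℝ) + 1)⁻¹)⁻¹ * φ a := by
  rw [← setIntegral_congr_set Ico_ae_eq_Icc, ← integral_const_mul]
  refine integral_mono_of_nonneg ?_
    ((integrableOn_inv_one_sub_add_inv_mul (by positivity) hφ).const_mul _) ?_
  all_goals filter_upwards [ae_restrict_mem measurableSet_Ico] with a ha
  · exact sum_nonneg fun _ _ => sum_nonneg fun _ _ => mul_nonneg (pow_nonneg ha.1 _) (hφ₀ a ha)
  · simp_rw [← sum_mul]
    calc (∑ k ∈ Finset.Icc 1 K, ∑ ℓ ∈ Finset.Icc 1 L, a ^ ((k : ℤ) - ℓ).natAbs) * φ a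
        ≤ (∑ _k ∈ Finset.Icc 1 K, 3 * (1 - a + ((L : ℝ) + 1)⁻¹)⁻¹) * φ a := by
          refine mul_le_mul_of_nonneg_right (sum_le_sum fun k _ => ?_) (hφ₀ a ha)
          simpa using sum_pow_natAbs_sub_le ha.1 ha.2.le k (Finset.Icc 1 L)
      _ = 3 * K * ((1 - a + ((L : ℝ) + 1)⁻¹)⁻¹ * φ a) := by
        simp only [sum_const, Nat.card_Icc, add_tsub_cancel_right, nsmul_eq_mul]; ring

lemma isBigO_log_natFloor_mul_add_one {t : ℝ} (ht : 0 ≤ t) :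
    (fun n : ℕ => Real.log (⌊(n : ℝ) * t⌋₊ + 1)) =O[atTop] fun n : ℕ => Real.log n := by
  refine IsBigO.of_bound 2 ?_
  filter_upwards [eventually_ge_atTop 1,
    (Real.tendsto_log_atTop.comp tendsto_natCast_atTop_atTop).eventually_ge_atTop
      (Real.log (t + 1))] with n hn hlog
  have hn' : (1 : ℝ) ≤ n := by exact_mod_cast hn
  have hfloor : (⌊(n : ℝ) * t⌋₊ : ℝ) + 1 ≤ n * (t + 1) := by
    linarith [Nat.floor_le (mul_nonneg (Nat.cast_nonneg n) ht)]
  rw [Real.norm_of_nonneg (Real.log_nonneg (by simp)),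
    Real.norm_of_nonneg (Real.log_natCast_nonneg n)]
  calc Real.log (⌊(n : ℝ) * t⌋₊ + 1) ≤ Real.log (n * (t + 1)) :=
        Real.log_le_log (by positivity) hfloor
    _ = Real.log n + Real.log (t + 1) := Real.log_mul (by positivity) (by positivity)
    _ ≤ 2 * Real.log n := by simp only [Function.comp_apply] at hlog; linarith

theorem integral_double_sum_psi_error_limit_general (ψ : ℝ → ℝ) (ψ₁ : ℝ)
    (hint : IntegrableOn ψ (Set.Ico (0 : ℝ) 1))
    (hlim : Tendsto ψ (nhdsWithin 1 (Set.Iio 1)) (nhds ψ₁))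
    (t₁ t₂ : ℝ) (ht₁ : 0 < t₁) (ht₂ : 0 < t₂) :
    Tendsto (fun n : ℕ =>
      (1 / (n * Real.log n)) *
        ∫ a in Set.Icc (0 : ℝ) 1,
          ∑ k ∈ Finset.Icc 1 ⌊(n : ℝ) * t₁⌋₊, ∑ ℓ ∈ Finset.Icc 1 ⌊(n : ℝ) * t₂⌋₊,
            a ^ (((k : ℤ) - ℓ).natAbs) * |ψ a - ψ₁|)
      atTop (nhds 0) := by
  set φ : ℝ → ℝ := fun a => |ψ a - ψ₁|
  have hφ : IntegrableOn φ (Set.Ico 0 1) := (hint.sub (integrableOn_const (by simp))).abs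
  have hφ₀ : ∀ a ∈ Set.Ico (0 : ℝ) 1, 0 ≤ φ a := fun a _ => abs_nonneg _
  have hφlim : Tendsto φ (𝓝[<] 1) (𝓝 0) := by simpa using (hlim.sub_const ψ₁).abs
  have hK : (fun n : ℕ => (⌊(n : ℝ) * t₁⌋₊ : ℝ)) =O[atTop] fun n : ℕ => (n : ℝ) :=
    IsBigO.of_bound t₁ <| Eventually.of_forall fun n => by
      simpa [mul_comm] using Nat.floor_le (mul_nonneg (Nat.cast_nonneg n) ht₁.le)
  have hM : Tendsto (fun n : ℕ => (⌊(n : ℝ) * t₂⌋₊ : ℝ) + 1) atTop atTop :=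
    tendsto_atTop_add_const_right _ 1 <| tendsto_natCast_atTop_atTop.comp <|
      tendsto_nat_floor_atTop.comp <| tendsto_natCast_atTop_atTop.atTop_mul_const ht₂
  have hF := ((isLittleO_setIntegral_inv_one_sub_add_inv_mul hφ hφ₀ hφlim).comp_tendsto
    hM).trans_isBigO (isBigO_log_natFloor_mul_add_one ht₂.le)
  have hn (n : ℕ) : 0 ≤ 1 / ((n : ℝ) * Real.log n) := by
    have := Real.log_natCast_nonneg n
    positivity
  refine squeeze_zero (fun n => ?_) (fun n => ?_)
    (by simpa using (hK.mul_isLittleO hF).tendsto_div_nhds_zero.const_mul 3)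
  · exact mul_nonneg (hn n) (setIntegral_nonneg measurableSet_Icc fun a ha =>
      sum_nonneg fun _ _ => sum_nonneg fun _ _ => mul_nonneg (pow_nonneg ha.1 _) (abs_nonneg _))
  · calc _ ≤ 1 / ((n : ℝ) * Real.log n) * (3 * ⌊(n : ℝ) * t₁⌋₊ *
            ∫ a in Set.Ico 0 1, (1 - a + ((⌊(n : ℝ) * t₂⌋₊ : ℝ) + 1)⁻¹)⁻¹ * φ a) :=
          mul_le_mul_of_nonneg_left (setIntegral_sum_sum_pow_natAbs_sub_mul_le hφ hφ₀ _ _) (hn n)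
      _ = _ := by ring

theorem integral_double_sum_psi_error_limit (ψ : ℝ → ℝ) (ψ₁ : ℝ) (hψ₁ : 0 < ψ₁)
    (hnonneg : ∀ x ∈ Set.Ico (0 : ℝ) 1, 0 ≤ ψ x)
    (hint : IntegrableOn ψ (Set.Ico (0 : ℝ) 1))
    (hlim : Tendsto ψ (nhdsWithin 1 (Set.Iio 1)) (nhds ψ₁))
    (t₁ t₂ : ℝ) (ht₁ : 0 < t₁) (ht₂ : 0 < t₂) :
    Tendsto (fun n : ℕ =>
      (1 / (n * Real.log n)) *
        ∫ a in Set.Icc (0 : ℝ) 1,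
          ∑ k ∈ Finset.Icc 1 ⌊(n : ℝ) * t₁⌋₊, ∑ ℓ ∈ Finset.Icc 1 ⌊(n : ℝ) * t₂⌋₊,
            a ^ (((k : ℤ) - ℓ).natAbs) * |ψ a - ψ₁|)
      atTop (nhds 0) :=
  integral_double_sum_psi_error_limit_general ψ ψ₁ hint hlim t₁ t₂ ht₁ ht₂
end

section
/- Let α be a random variable on (0,1) with density ψ(x)(1−x), where ψ is integrable on [0,1) with lim_{x↑1} ψ(x) = ψ₁ ∈ (0,∞), and let λ > 0. Then for each x > 0, N · P(λ(1+α)/(N(1−α)²) > x) → ψ₁ λ / x as N → ∞. -/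
/-!
For `a ∈ (0, 1)` the event `λ (1 + a) / (N (1 - a)²) > x` says exactly `1 - a < t_N`, where `t_N`
is the positive root of `N x t² + λ t = 2 λ`. Its probability is therefore
`∫_{1 - t_N}^1 ψ(a) (1 - a) da ~ ψ₁ t_N² / 2` as `t_N → 0`, while
`N t_N² / 2 = (2 - t_N) λ / (2 x) → λ / x`.
-/

open MeasureTheory Filter Set Topology

theorem setIntegral_Ioo_one_sub {c : ℝ} (hc : c ≤ 1) :
    ∫ a in Ioo c 1, (1 - a) = (1 - c) ^ 2 / 2 := by
  rw [← integral_Ioc_eq_integral_Ioo, ← intervalIntegral.integral_of_le hc,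
    intervalIntegral.integral_comp_sub_left (fun a => a), integral_id]
  ring

theorem integrableOn_Ioo_mul_one_sub {ψ : ℝ → ℝ} {c : ℝ} (hψ : IntegrableOn ψ (Ioo c 1)) :
    IntegrableOn (fun a => ψ a * (1 - a)) (Ioo c 1) := by
  rw [← integrableOn_Icc_iff_integrableOn_Ioo] at hψ ⊢
  exact hψ.mul_continuousOn (by fun_prop) isCompact_Icc

theorem abs_setIntegral_Ioo_mul_one_sub_sub_le {ψ : ℝ → ℝ} {ψ₁ c ε : ℝ} (hc : c ≤ 1)
    (hψ : IntegrableOn ψ (Ioo c 1)) (hε : ∀ a ∈ Ioo c 1, |ψ a - ψ₁| ≤ ε) :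
    |(∫ a in Ioo c 1, ψ a * (1 - a)) - ψ₁ * ((1 - c) ^ 2 / 2)| ≤ ε * ((1 - c) ^ 2 / 2) := by
  have hlin : IntegrableOn (fun a : ℝ => 1 - a) (Ioo c 1) :=
    (integrableOn_Icc_iff_integrableOn_Ioo).1
      (by fun_prop : Continuous fun a : ℝ => 1 - a).integrableOn_Icc
  rw [← setIntegral_Ioo_one_sub hc, ← integral_const_mul, ← integral_const_mul,
    ← integral_sub (integrableOn_Ioo_mul_one_sub hψ) (hlin.const_mul ψ₁), ← Real.norm_eq_abs]
  refine norm_integral_le_of_norm_le (hlin.const_mul ε) ?_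
  filter_upwards [ae_restrict_mem measurableSet_Ioo] with a ha
  rw [← sub_mul, Real.norm_eq_abs, abs_mul, abs_of_pos (sub_pos.2 ha.2)]
  exact mul_le_mul_of_nonneg_right (hε a ha) (sub_pos.2 ha.2).le

theorem tendsto_setIntegral_Ioo_mul_one_sub_div {ψ : ℝ → ℝ} {ψ₁ c : ℝ} (hc : c < 1)
    (hψ : IntegrableOn ψ (Ioo c 1)) (hlim : Tendsto ψ (𝓝[<] 1) (𝓝 ψ₁)) :
    Tendsto (fun u => (∫ a in Ioo (1 - u) 1, ψ a * (1 - a)) / (u ^ 2 / 2)) (𝓝[>] 0) (𝓝 ψ₁) := by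
  rw [Metric.tendsto_nhds]
  intro ε hε
  obtain ⟨δ, hδ, hψδ⟩ := Metric.tendsto_nhdsWithin_nhds.1 hlim (ε / 2) (half_pos hε)
  filter_upwards [Ioo_mem_nhdsGT (lt_min hδ (sub_pos.2 hc))] with u ⟨hu0, hu⟩
  have hclose : ∀ a ∈ Ioo (1 - u) 1, |ψ a - ψ₁| ≤ ε / 2 := by
    intro a ha
    refine (hψδ ha.2 ?_).le
    rw [Real.dist_eq, abs_of_neg (by linarith [ha.2])]
    linarith [ha.1, min_le_left δ (1 - c)]
  have hbound := abs_setIntegral_Ioo_mul_one_sub_sub_le (by linarith)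
    (hψ.mono_set (Ioo_subset_Ioo_left (by linarith [min_le_right δ (1 - c)]))) hclose
  rw [sub_sub_cancel] at hbound
  have hu2 : 0 < u ^ 2 / 2 := by positivity
  rw [Real.dist_eq, div_sub' hu2.ne', abs_div, abs_of_pos hu2, div_lt_iff₀ hu2,
    mul_comm (u ^ 2 / 2)]
  linarith [mul_lt_mul_of_pos_right (half_lt_self hε) hu2]

/-- The positive root of `k t² + λ t = 2 λ`, i.e. `(√(λ² + 8 λ k) - λ) / (2 k)`, written in a form
that stays valid at `k = 0`. -/
noncomputable def tailThreshold (lam k : ℝ) : ℝ := 4 * lam / (lam + √(lam ^ 2 + 8 * lam * k))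

section tailThreshold

variable {lam k : ℝ}

theorem tailThreshold_pos (hlam : 0 < lam) (k : ℝ) : 0 < tailThreshold lam k := by
  unfold tailThreshold; positivity

theorem tailThreshold_quadratic (hlam : 0 < lam) (hk : 0 ≤ k) :
    k * tailThreshold lam k ^ 2 + lam * tailThreshold lam k = 2 * lam := by
  have hs := Real.sq_sqrt (show 0 ≤ lam ^ 2 + 8 * lam * k by positivity)
  have hD : 0 < lam + √(lam ^ 2 + 8 * lam * k) := by positivity
  have htD : tailThreshold lam k * (lam + √(lam ^ 2 + 8 * lam * k)) = 4 * lam :=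
    div_mul_cancel₀ _ hD.ne'
  generalize tailThreshold lam k = t at htD ⊢
  generalize √(lam ^ 2 + 8 * lam * k) = s at hs hD htD
  refine mul_right_cancel₀ (pow_ne_zero 2 hD.ne') ?_
  linear_combination (k * (t * (lam + s) + 4 * lam) + lam * (lam + s)) * htD - 2 * lam * hs

theorem lt_iff_one_sub_lt_tailThreshold (hlam : 0 < lam) (hk : 0 ≤ k) {a : ℝ} (ha : a < 1) :
    k * (1 - a) ^ 2 < lam * (1 + a) ↔ 1 - tailThreshold lam k < a := by
  have ht := tailThreshold_quadratic hlam hk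
  have ht0 := tailThreshold_pos hlam k
  set t := tailThreshold lam k
  have hfactor : lam * (1 + a) - k * (1 - a) ^ 2 = (t - (1 - a)) * (k * ((1 - a) + t) + lam) := by
    linear_combination -ht
  have hpos : 0 < k * ((1 - a) + t) + lam := by nlinarith
  rw [← sub_pos, hfactor, mul_pos_iff_of_pos_right hpos, sub_pos, sub_lt_comm]

theorem tendsto_tailThreshold (hlam : 0 < lam) :
    Tendsto (tailThreshold lam) atTop (𝓝[>] 0) := by
  refine tendsto_nhdsWithin_iff.2 ⟨?_, .of_forall (tailThreshold_pos hlam)⟩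
  have hsqrt : Tendsto (fun k => √(lam ^ 2 + 8 * lam * k)) atTop atTop :=
    Real.tendsto_sqrt_atTop.comp <| tendsto_atTop_add_const_left _ _ <|
      tendsto_id.const_mul_atTop (by positivity)
  exact tendsto_const_nhds.div_atTop (tendsto_atTop_add_const_left _ _ hsqrt)

theorem tendsto_mul_tailThreshold_sq (hlam : 0 < lam) :
    Tendsto (fun k => k * tailThreshold lam k ^ 2 / 2) atTop (𝓝 lam) := by
  have hlim := ((tendsto_tailThreshold hlam).mono_right nhdsWithin_le_nhds).const_mul (lam / 2)
  rw [mul_zero] at hlim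
  refine (tendsto_const_nhds.sub hlim).congr' ?_ |>.trans (by rw [sub_zero])
  filter_upwards [eventually_ge_atTop 0] with k hk
  linear_combination -(tailThreshold_quadratic hlam hk) / 2

end tailThreshold

theorem toReal_measure_preimage_eq_setIntegral {Ω : Type*} [MeasurableSpace Ω] {ℙ : Measure Ω}
    {α : Ω → ℝ} (hα : Measurable α) {f : ℝ → ℝ} {s S : Set ℝ} (hs : MeasurableSet s)
    (hS : MeasurableSet S) (hf : AEStronglyMeasurable f (volume.restrict s))
    (hf0 : ∀ a ∈ s, 0 ≤ f a)
    (hdens : ℙ.map α = volume.withDensity (fun a => ENNReal.ofReal (s.indicator f a))) :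
    (ℙ (α ⁻¹' S)).toReal = ∫ a in s ∩ S, f a := by
  rw [← Measure.map_apply hα hS, hdens, withDensity_apply _ hS,
    ← integral_eq_lintegral_of_nonneg_ae (.of_forall (indicator_nonneg hf0))
      ((aestronglyMeasurable_indicator_iff hs).2 hf).restrict,
    integral_indicator hs, Measure.restrict_restrict hs]

theorem setOf_lt_div_inter_Ioo {lam n x : ℝ} (hlam : 0 < lam) (hn : 0 < n) (hx : 0 < x)
    (ht : tailThreshold lam (n * x) ≤ 1) :
    Ioo 0 1 ∩ {a : ℝ | lam * (1 + a) / (n * (1 - a) ^ 2) > x} =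
      Ioo (1 - tailThreshold lam (n * x)) 1 := by
  have hiff : ∀ a < 1,
      x < lam * (1 + a) / (n * (1 - a) ^ 2) ↔ 1 - tailThreshold lam (n * x) < a := by
    intro a ha
    have : 0 < 1 - a := sub_pos.2 ha
    rw [lt_div_iff₀ (by positivity), ← lt_iff_one_sub_lt_tailThreshold hlam (by positivity) ha]
    ring_nf
  ext a
  simp only [mem_inter_iff, mem_ofPred_eq, mem_Ioo, gt_iff_lt]
  constructor
  · rintro ⟨⟨-, ha1⟩, h⟩
    exact ⟨(hiff a ha1).1 h, ha1⟩
  · rintro ⟨h, ha1⟩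
    exact ⟨⟨by linarith, ha1⟩, (hiff a ha1).2 h⟩

theorem tail_prob_limit_general {Ω : Type*} [MeasurableSpace Ω]
    (ℙ : Measure Ω)
    (α : Ω → ℝ) (hα : Measurable α)
    (ψ₁ : ℝ)
    (ψ : ℝ → ℝ) (hnonneg : ∀ x ∈ Set.Ico (0 : ℝ) 1, 0 ≤ ψ x)
    (hint : IntegrableOn ψ (Set.Ico (0 : ℝ) 1))
    (hlim : Tendsto ψ (nhdsWithin 1 (Set.Iio 1)) (nhds ψ₁))
    (hdens : ℙ.map α = volume.withDensity
      (fun x => ENNReal.ofReal ((Set.Ioo (0 : ℝ) 1).indicator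
        (fun x => ψ x * (1 - x)) x)))
    (lam : ℝ) (hlam : 0 < lam) (x : ℝ) (hx : 0 < x) :
    Tendsto (fun N : ℕ =>
      (N : ℝ) * (ℙ {ω | lam * (1 + α ω) / (N * (1 - α ω) ^ 2) > x}).toReal)
      atTop (nhds (ψ₁ * lam / x)) := by
  have hψ : IntegrableOn ψ (Ioo 0 1) := hint.mono_set Ioo_subset_Ico_self
  have hk : Tendsto (fun N : ℕ => (N : ℝ) * x) atTop atTop :=
    tendsto_natCast_atTop_atTop.atTop_mul_const hx
  have ht : Tendsto (fun N : ℕ => tailThreshold lam (N * x)) atTop (𝓝[>] 0) :=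
    (tendsto_tailThreshold hlam).comp hk
  have hratio := (tendsto_setIntegral_Ioo_mul_one_sub_div one_pos hψ hlim).comp ht
  have hscale := ((tendsto_mul_tailThreshold_sq hlam).comp hk).div_const x
  rw [show ψ₁ * lam / x = lam / x * ψ₁ by ring]
  refine (hscale.mul hratio).congr' ?_
  filter_upwards [eventually_ge_atTop 1, ht (Ioo_mem_nhdsGT one_pos)] with N hN1 ⟨ht0, ht1⟩
  have hN : (0 : ℝ) < N := by exact_mod_cast hN1
  have hprob := toReal_measure_preimage_eq_setIntegral
    (S := {a : ℝ | lam * (1 + a) / (N * (1 - a) ^ 2) > x}) hα measurableSet_Ioo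
    (measurableSet_lt measurable_const (by fun_prop))
    (integrableOn_Ioo_mul_one_sub hψ).aestronglyMeasurable
    (fun a ha => mul_nonneg (hnonneg a (Ioo_subset_Ico_self ha)) (sub_pos.2 ha.2).le) hdens
  rw [setOf_lt_div_inter_Ioo hlam hN hx ht1.le] at hprob
  simp only [Function.comp_apply, preimage_ofPred_eq] at hprob ⊢
  rw [hprob]
  field_simp

theorem tail_prob_limit {Ω : Type*} [MeasurableSpace Ω]
    (ℙ : Measure Ω) [IsProbabilityMeasure ℙ]
    (α : Ω → ℝ) (hα : Measurable α) (hrange : ∀ ω, α ω ∈ Set.Ioo (0 : ℝ) 1)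
    (ψ₁ : ℝ) (hψ₁ : 0 < ψ₁)
    (ψ : ℝ → ℝ) (hnonneg : ∀ x ∈ Set.Ico (0 : ℝ) 1, 0 ≤ ψ x)
    (hint : IntegrableOn ψ (Set.Ico (0 : ℝ) 1))
    (hlim : Tendsto ψ (nhdsWithin 1 (Set.Iio 1)) (nhds ψ₁))
    (hdens : ℙ.map α = volume.withDensity
      (fun x => ENNReal.ofReal ((Set.Ioo (0 : ℝ) 1).indicator
        (fun x => ψ x * (1 - x)) x)))
    (lam : ℝ) (hlam : 0 < lam) (x : ℝ) (hx : 0 < x) :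
    Tendsto (fun N : ℕ =>
      (N : ℝ) * (ℙ {ω | lam * (1 + α ω) / (N * (1 - α ω) ^ 2) > x}).toReal)
      atTop (nhds (ψ₁ * lam / x)) :=
  tail_prob_limit_general ℙ α hα ψ₁ ψ hnonneg hint hlim hdens lam hlam x hx
end

section
/- Let α be a random variable on (0,1) with density ψ(x)(1−x), where ψ is integrable on [0,1) with lim_{x↑1} ψ(x) = ψ₁ ∈ (0,∞), and λ > 0. Define X_N = λ(1+α)/(N(1−α)²). Then lim_{ε→0} limsup_{N→∞} N · E[X_N² · 1{X_N ≤ ε}] = 0. -/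
/-!
Write `X_N = Y / N` with `Y = λ(1+α)/(1-α)²`. Then `N 𝔼[X_N²; X_N ≤ ε] = 𝔼[Y²; Y ≤ Nε] / N`, so it
suffices that the truncated second moment `𝔼[Y²; Y ≤ M]` grows at most linearly in `M`. Pick
`a < 1` with `ψ ≤ ψ₁ + 1` on `(a, 1)`. On `{α ≤ a}` the variable `Y` is bounded by `2λ/(1-a)²`.
On `{α > a}` the density of `α` is at most `(ψ₁ + 1)(1 - x)`, `Y² ≤ 4λ²/(1-α)⁴`, and `Y ≤ M` forces
`1 - α ≥ √(λ/M)`; integrating `(1-x)⁻³` over that range gives `𝔼[Y²; Y ≤ M, α > a] ≤ 2λ(ψ₁ + 1)M`.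
Hence the `limsup` in `N` is at most `2λ(ψ₁ + 1)ε`.
-/

open MeasureTheory Filter Set Topology

lemma integrableOn_inv_one_sub_pow {a c : ℝ} (hc : c < 1) (n : ℕ) :
    IntegrableOn (fun x => ((1 - x) ^ n)⁻¹) (Ioc a c) := by
  refine (ContinuousOn.integrableOn_Icc ?_).mono_set Ioc_subset_Icc_self
  exact ContinuousOn.inv₀ (by fun_prop) fun x hx => pow_ne_zero _ (by linarith [hx.2])

lemma setIntegral_Ioc_inv_one_sub_pow_three_le {a c : ℝ} (hc : c < 1) :
    ∫ x in Ioc a c, ((1 - x) ^ 3)⁻¹ ≤ ((1 - c) ^ 2)⁻¹ / 2 := by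
  rcases lt_or_ge c a with hca | hac
  · rw [Ioc_eq_empty hca.not_gt, Measure.restrict_empty, integral_zero_measure]
    positivity
  have h0 : (0 : ℝ) ∉ uIcc (1 - c) (1 - a) := by
    rw [uIcc_of_le (by linarith)]
    exact fun h => by linarith [h.1]
  have hval : ∫ x in a..c, ((1 - x) ^ 3)⁻¹ = ((1 - c) ^ 2)⁻¹ / 2 - ((1 - a) ^ 2)⁻¹ / 2 := by
    simp only [← zpow_natCast, ← zpow_neg]
    rw [intervalIntegral.integral_comp_sub_left (fun t => t ^ (-(3 : ℕ) : ℤ)),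
      integral_zpow (Or.inr ⟨by norm_num, h0⟩)]
    norm_num
    ring
  rw [← intervalIntegral.integral_of_le hac, hval]
  linarith [show 0 ≤ ((1 - a) ^ 2)⁻¹ by positivity]

lemma integral_mul_indicator_inv_one_sub_pow_four_le {d : ℝ → ℝ} {a b c : ℝ}
    (hd0 : ∀ x, 0 ≤ d x) (hb : 0 ≤ b) (hdb : ∀ x ∈ Ioo a 1, d x ≤ b * (1 - x)) (hc : c < 1) :
    ∫ x, d x * (Ioc a c).indicator (fun x => ((1 - x) ^ 4)⁻¹) x ≤ b * (((1 - c) ^ 2)⁻¹ / 2) := by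
  have hdom : ∀ x, d x * (Ioc a c).indicator (fun x => ((1 - x) ^ 4)⁻¹) x
      ≤ b * (Ioc a c).indicator (fun x => ((1 - x) ^ 3)⁻¹) x := by
    intro x
    by_cases hx : x ∈ Ioc a c
    · have h1x : 0 < 1 - x := by linarith [hx.2]
      rw [indicator_of_mem hx, indicator_of_mem hx]
      calc d x * ((1 - x) ^ 4)⁻¹ ≤ b * (1 - x) * ((1 - x) ^ 4)⁻¹ := by
            gcongr
            exact hdb x ⟨hx.1, by linarith⟩
        _ = b * ((1 - x) ^ 3)⁻¹ := by field_simp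
    · simp [indicator_of_notMem hx]
  have hnonneg : ∀ x, 0 ≤ d x * (Ioc a c).indicator (fun x => ((1 - x) ^ 4)⁻¹) x :=
    fun x => mul_nonneg (hd0 x) <| indicator_nonneg (fun _ _ => by positivity) x
  calc ∫ x, d x * (Ioc a c).indicator (fun x => ((1 - x) ^ 4)⁻¹) x
      ≤ ∫ x, b * (Ioc a c).indicator (fun x => ((1 - x) ^ 3)⁻¹) x :=
        integral_mono_of_nonneg (ae_of_all _ hnonneg)
          (((integrableOn_inv_one_sub_pow hc 3).integrable_indicator measurableSet_Ioc).const_mul b)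
          (ae_of_all _ hdom)
    _ = b * ∫ x in Ioc a c, ((1 - x) ^ 3)⁻¹ := by
        rw [integral_const_mul, integral_indicator measurableSet_Ioc]
    _ ≤ b * (((1 - c) ^ 2)⁻¹ / 2) := by
        gcongr
        exact setIntegral_Ioc_inv_one_sub_pow_three_le hc

lemma integral_comp_eq_integral_mul_of_map_eq_withDensity {Ω E : Type*} [MeasurableSpace Ω]
    [MeasurableSpace E] {μ : Measure Ω} {ν : Measure E} {α : Ω → E} (hα : AEMeasurable α μ)
    {d : E → ℝ} (hdm : AEMeasurable d ν) (hd0 : ∀ᵐ x ∂ν, 0 ≤ d x)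
    (hmap : μ.map α = ν.withDensity (fun x => ENNReal.ofReal (d x)))
    {G : E → ℝ} (hG : AEStronglyMeasurable G (μ.map α)) :
    ∫ ω, G (α ω) ∂μ = ∫ x, d x * G x ∂ν := by
  rw [← integral_map hα hG, hmap, integral_withDensity_eq_integral_toReal_smul₀
    hdm.ennreal_ofReal (ae_of_all _ fun _ => ENNReal.ofReal_lt_top)]
  refine integral_congr_ae ?_
  filter_upwards [hd0] with x hx
  rw [ENNReal.toReal_ofReal hx, smul_eq_mul]

lemma indicator_sq_le_add_indicator {lam a M x : ℝ} (hlam : 0 < lam) (ha : a < 1) (hM : 0 < M)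
    (hx : x ∈ Ioo (0 : ℝ) 1) :
    {y : ℝ | lam * (1 + y) / (1 - y) ^ 2 ≤ M}.indicator
        (fun y => (lam * (1 + y) / (1 - y) ^ 2) ^ 2) x
      ≤ (2 * lam / (1 - a) ^ 2) ^ 2
        + 4 * lam ^ 2 * (Ioc a (1 - √(lam / M))).indicator (fun y => ((1 - y) ^ 4)⁻¹) x := by
  obtain ⟨hx0, hx1⟩ := hx
  have h1x : 0 < 1 - x := by linarith
  have htail0 : 0 ≤ 4 * lam ^ 2 * (Ioc a (1 - √(lam / M))).indicator (fun y => ((1 - y) ^ 4)⁻¹) x :=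
    mul_nonneg (by positivity) (indicator_nonneg (fun y _ => by positivity) x)
  by_cases hgM : x ∈ {y : ℝ | lam * (1 + y) / (1 - y) ^ 2 ≤ M}
  swap
  · rw [indicator_of_notMem hgM]
    positivity
  rw [indicator_of_mem hgM]
  have hg0 : 0 ≤ lam * (1 + x) / (1 - x) ^ 2 := by positivity
  have hg_le : lam * (1 + x) / (1 - x) ^ 2 ≤ 2 * lam / (1 - x) ^ 2 :=
    div_le_div_of_nonneg_right (by nlinarith) (by positivity)
  by_cases hxa : x ≤ a
  · have hK : lam * (1 + x) / (1 - x) ^ 2 ≤ 2 * lam / (1 - a) ^ 2 :=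
      hg_le.trans (by gcongr)
    linarith [pow_le_pow_left₀ hg0 hK 2]
  · have hδ : √(lam / M) ≤ 1 - x := by
      refine Real.sqrt_le_iff.2 ⟨h1x.le, (div_le_iff₀ hM).2 ?_⟩
      have : lam / (1 - x) ^ 2 ≤ M :=
        le_trans (div_le_div_of_nonneg_right (by nlinarith) (by positivity)) hgM
      rwa [div_le_iff₀ (by positivity), mul_comm] at this
    rw [indicator_of_mem (show x ∈ Ioc a (1 - √(lam / M)) from ⟨not_le.1 hxa, by linarith⟩)]
    calc (lam * (1 + x) / (1 - x) ^ 2) ^ 2 ≤ (2 * lam / (1 - x) ^ 2) ^ 2 :=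
          pow_le_pow_left₀ hg0 hg_le 2
      _ = 4 * lam ^ 2 * ((1 - x) ^ 4)⁻¹ := by field_simp; ring
      _ ≤ _ := le_add_of_nonneg_left (sq_nonneg _)

theorem integral_indicator_sq_le_add_mul {Ω : Type*} [MeasurableSpace Ω] (μ : Measure Ω)
    [IsProbabilityMeasure μ] {α : Ω → ℝ} (hα : Measurable α) (hrange : ∀ ω, α ω ∈ Ioo (0 : ℝ) 1)
    {d : ℝ → ℝ} (hdm : AEMeasurable d) (hd0 : ∀ x, 0 ≤ d x)
    (hdens : μ.map α = volume.withDensity (fun x => ENNReal.ofReal (d x)))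
    {a b : ℝ} (ha : a < 1) (hb : 0 ≤ b) (hdb : ∀ x ∈ Ioo a 1, d x ≤ b * (1 - x))
    {lam : ℝ} (hlam : 0 < lam) {M : ℝ} (hM : 0 < M) :
    ∫ ω, {ω | lam * (1 + α ω) / (1 - α ω) ^ 2 ≤ M}.indicator
        (fun ω => (lam * (1 + α ω) / (1 - α ω) ^ 2) ^ 2) ω ∂μ
      ≤ (2 * lam / (1 - a) ^ 2) ^ 2 + 2 * lam * b * M := by
  set δ := √(lam / M) with hδ_def
  have hδ : 0 < δ := Real.sqrt_pos.2 (by positivity)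
  set G : ℝ → ℝ := fun x => 4 * lam ^ 2 * (Ioc a (1 - δ)).indicator (fun y => ((1 - y) ^ 4)⁻¹) x
  have hGm : Measurable G :=
    ((Measurable.indicator (by fun_prop) measurableSet_Ioc).const_mul _)
  have hGb : ∀ x, ‖G x‖ ≤ 4 * lam ^ 2 * (δ ^ 4)⁻¹ := by
    intro x
    have htail0 : 0 ≤ G x :=
      mul_nonneg (by positivity) (indicator_nonneg (fun _ _ => by positivity) x)
    rw [Real.norm_of_nonneg htail0]
    dsimp only [G]
    gcongr
    by_cases hx : x ∈ Ioc a (1 - δ)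
    · rw [indicator_of_mem hx]
      gcongr
      linarith [hx.2]
    · rw [indicator_of_notMem hx]
      positivity
  have hGi : Integrable (fun ω => G (α ω)) μ :=
    .of_bound (hGm.comp hα).aestronglyMeasurable _ (ae_of_all _ fun ω => hGb (α ω))
  have hGd : ∫ x, d x * G x ≤ 2 * lam * b * M := by
    calc ∫ x, d x * G x
        = 4 * lam ^ 2 * ∫ x, d x * (Ioc a (1 - δ)).indicator (fun y => ((1 - y) ^ 4)⁻¹) x := by
          rw [← integral_const_mul]; congr 1 with x; ring
      _ ≤ 4 * lam ^ 2 * (b * (((1 - (1 - δ)) ^ 2)⁻¹ / 2)) := by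
          gcongr
          exact integral_mul_indicator_inv_one_sub_pow_four_le hd0 hb hdb (by linarith)
      _ = 2 * lam * b * M := by
          rw [sub_sub_cancel, hδ_def, Real.sq_sqrt (by positivity)]
          field_simp
          ring
  calc _ ≤ ∫ ω, ((2 * lam / (1 - a) ^ 2) ^ 2 + G (α ω)) ∂μ :=
        integral_mono_of_nonneg
          (ae_of_all _ fun ω => indicator_nonneg (fun _ _ => sq_nonneg _) (α ω))
          ((integrable_const _).add hGi)
          (ae_of_all _ fun ω => indicator_sq_le_add_indicator hlam ha hM (hrange ω))
    _ = (2 * lam / (1 - a) ^ 2) ^ 2 + ∫ x, d x * G x := by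
        rw [integral_add (integrable_const _) hGi, integral_const, probReal_univ, one_smul,
          integral_comp_eq_integral_mul_of_map_eq_withDensity hα.aemeasurable hdm
            (ae_of_all _ hd0) hdens hGm.aestronglyMeasurable]
    _ ≤ _ := by gcongr

lemma limsup_mem_Icc_of_le_div_add {u : ℕ → ℝ} {A c : ℝ} (h0 : ∀ N, 0 ≤ u N)
    (h : ∀ᶠ N in atTop, u N ≤ A / N + c) :
    limsup u atTop ∈ Icc 0 c := by
  have hlim : Tendsto (fun N : ℕ => A / N + c) atTop (𝓝 c) := by
    simpa using (tendsto_const_div_atTop_nhds_zero_nat A).add_const c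
  have hbdd : IsBoundedUnder (· ≤ ·) atTop u := hlim.isBoundedUnder_le.mono_le h
  refine ⟨le_limsup_of_frequently_le (.of_forall h0) hbdd, ?_⟩
  calc limsup u atTop ≤ limsup (fun N : ℕ => A / N + c) atTop :=
        limsup_le_limsup h (isCoboundedUnder_le_of_le atTop h0) hlim.isBoundedUnder_le
    _ = c := hlim.limsup_eq

lemma mul_integral_indicator_sq_div_le {Ω : Type*} [MeasurableSpace Ω] {μ : Measure Ω}
    {Y : Ω → ℝ} {A B : ℝ}
    (hY : ∀ M > 0, ∫ ω, {ω | Y ω ≤ M}.indicator (fun ω => Y ω ^ 2) ω ∂μ ≤ A + B * M)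
    {N : ℕ} (hN : 0 < N) {ε : ℝ} (hε : 0 < ε) :
    (N : ℝ) * ∫ ω, {ω | Y ω / N ≤ ε}.indicator (fun ω => (Y ω / N) ^ 2) ω ∂μ ≤ A / N + B * ε := by
  have hN' : (0 : ℝ) < N := Nat.cast_pos.2 hN
  have hscale : ∀ ω, (N : ℝ) * {ω | Y ω / N ≤ ε}.indicator (fun ω => (Y ω / N) ^ 2) ω
      = (N : ℝ)⁻¹ * {ω | Y ω ≤ N * ε}.indicator (fun ω => Y ω ^ 2) ω := by
    intro ω
    simp only [indicator, mem_ofPred_eq, div_le_iff₀ hN', mul_comm ε]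
    split_ifs
    · field_simp
    · simp
  calc (N : ℝ) * ∫ ω, {ω | Y ω / N ≤ ε}.indicator (fun ω => (Y ω / N) ^ 2) ω ∂μ
      = (N : ℝ)⁻¹ * ∫ ω, {ω | Y ω ≤ N * ε}.indicator (fun ω => Y ω ^ 2) ω ∂μ := by
        simp only [← integral_const_mul, hscale]
    _ ≤ (N : ℝ)⁻¹ * (A + B * (N * ε)) := by gcongr; exact hY _ (by positivity)
    _ = A / N + B * ε := by field_simp

theorem tendsto_limsup_mul_integral_indicator_sq {Ω : Type*} [MeasurableSpace Ω] (μ : Measure Ω)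
    {Y : Ω → ℝ} {A B : ℝ}
    (hY : ∀ M > 0, ∫ ω, {ω | Y ω ≤ M}.indicator (fun ω => Y ω ^ 2) ω ∂μ ≤ A + B * M)
    {X : ℕ → Ω → ℝ} (hX : ∀ N ω, X N ω = Y ω / N) :
    Tendsto (fun ε : ℝ =>
      limsup (fun N : ℕ => (N : ℝ) * ∫ ω, {ω | X N ω ≤ ε}.indicator (fun ω => X N ω ^ 2) ω ∂μ)
        atTop) (𝓝[>] 0) (𝓝 0) := by
  obtain rfl : X = fun (N : ℕ) ω => Y ω / N := funext₂ hX
  have hbound : ∀ ε > 0, limsup (fun N : ℕ =>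
      (N : ℝ) * ∫ ω, {ω | Y ω / N ≤ ε}.indicator (fun ω => (Y ω / N) ^ 2) ω ∂μ) atTop
        ∈ Icc 0 (B * ε) := fun ε hε =>
    limsup_mem_Icc_of_le_div_add
      (fun N => mul_nonneg N.cast_nonneg (integral_nonneg fun ω =>
        indicator_nonneg (fun _ _ => sq_nonneg _) ω))
      (eventually_atTop.2 ⟨1, fun N hN => mul_integral_indicator_sq_div_le hY hN hε⟩)
  have hB : Tendsto (fun ε : ℝ => B * ε) (𝓝[>] 0) (𝓝 0) := by
    simpa using ((continuous_const_mul B).tendsto 0).mono_left nhdsWithin_le_nhds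
  refine tendsto_of_tendsto_of_tendsto_of_le_of_le' tendsto_const_nhds hB ?_ ?_ <;>
    filter_upwards [self_mem_nhdsWithin] with ε hε
  exacts [(hbound ε hε).1, (hbound ε hε).2]

theorem truncated_second_moment_limit {Ω : Type*} [MeasurableSpace Ω]
    (ℙ : Measure Ω) [IsProbabilityMeasure ℙ]
    (α : Ω → ℝ) (hα : Measurable α) (hrange : ∀ ω, α ω ∈ Set.Ioo (0 : ℝ) 1)
    (ψ₁ : ℝ) (hψ₁ : 0 < ψ₁)
    (ψ : ℝ → ℝ) (hnonneg : ∀ x ∈ Set.Ico (0 : ℝ) 1, 0 ≤ ψ x)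
    (hint : IntegrableOn ψ (Set.Ico (0 : ℝ) 1))
    (hlim : Tendsto ψ (nhdsWithin 1 (Set.Iio 1)) (nhds ψ₁))
    (hdens : ℙ.map α = volume.withDensity
      (fun x => ENNReal.ofReal ((Set.Ioo (0 : ℝ) 1).indicator
        (fun x => ψ x * (1 - x)) x)))
    (lam : ℝ) (hlam : 0 < lam)
    (X : ℕ → Ω → ℝ)
    (hX : ∀ N ω, X N ω = lam * (1 + α ω) / (N * (1 - α ω) ^ 2)) :
    Tendsto (fun ε : ℝ =>
      Filter.limsup (fun N : ℕ =>
        (N : ℝ) * ∫ ω, ({ω | X N ω ≤ ε}.indicator (fun ω => (X N ω) ^ 2)) ω ∂ℙ)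
        atTop)
      (nhdsWithin 0 (Set.Ioi 0)) (nhds 0) := by
  obtain ⟨a, ha0, ha1, hψa⟩ : ∃ a, 0 ≤ a ∧ a < 1 ∧ ∀ x ∈ Ioo a 1, ψ x ≤ ψ₁ + 1 := by
    obtain ⟨l, hl, hsub⟩ :=
      mem_nhdsLT_iff_exists_Ioo_subset.1 (hlim.eventually_le_const (lt_add_one ψ₁))
    exact ⟨max l 0, le_max_right _ _, max_lt hl one_pos,
      fun x hx => hsub ⟨(le_max_left _ _).trans_lt hx.1, hx.2⟩⟩
  set d : ℝ → ℝ := (Ioo 0 1).indicator (fun x => ψ x * (1 - x))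
  have hd0 : ∀ x, 0 ≤ d x := indicator_nonneg fun x hx =>
    mul_nonneg (hnonneg x ⟨hx.1.le, hx.2⟩) (by linarith [hx.2])
  have hdm : AEMeasurable d := by
    refine (aemeasurable_indicator_iff measurableSet_Ioo).2 (AEMeasurable.mul ?_ (by fun_prop))
    exact hint.aemeasurable.mono_set Ioo_subset_Ico_self
  have hdb : ∀ x ∈ Ioo a 1, d x ≤ (ψ₁ + 1) * (1 - x) := fun x hx =>
    calc d x = ψ x * (1 - x) := indicator_of_mem (s := Ioo 0 1) ⟨ha0.trans_lt hx.1, hx.2⟩ _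
      _ ≤ (ψ₁ + 1) * (1 - x) := mul_le_mul_of_nonneg_right (hψa x hx) (by linarith [hx.2])
  exact tendsto_limsup_mul_integral_indicator_sq ℙ
    (fun M hM =>
      integral_indicator_sq_le_add_mul ℙ hα hrange hdm hd0 hdens ha1 (by linarith) hdb hlam hM)
    (fun N ω => by rw [hX, div_div, mul_comm (N : ℝ)])
end

section
/- Let ψ : [0,1) → [0,∞) be integrable with lim_{x↑1} ψ(x) = ψ₁ ∈ (0,∞), and let σ > 0. Then for fixed positive reals t₁, t₂, (σ²/(n log n)) · ∫_0^1 ∑_{k=1}^{⌊n t₁⌋} ∑_{ℓ=1}^{⌊n t₂⌋} (a^{|k−ℓ|}/(1−a²)) ψ(a)(1−a) da → σ² ψ₁ min(t₁, t₂) as n → ∞. -/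
/-!
On `[0, 1)` we have `(1 - a) / (1 - a ^ 2) = 1 / (1 + a)`, so the integral is the Toeplitz sum
`∑_{k ≤ m₁, ℓ ≤ m₂} c_{|k - ℓ|}` of the moments `c_j = ∫₀¹ a ^ j g(a) da` of `g = ψ / (1 + ·)`.
Since the mass of `(j + 1) a ^ j` concentrates at `1` and `g → ψ₁ / 2` there,
`c_j = (ψ₁ / 2 + o(1)) / (j + 1)`. For the weights `1 / (j + 1)` the row sums of the Toeplitz
matrix are sums of two harmonic numbers, which makes the whole sum
`2 min(m₁, m₂) log n (1 + o(1))`, while an error `o(1 / (j + 1))` only contributes `o(n log n)`.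
-/

open Finset Filter MeasureTheory Topology Asymptotics

section ToeplitzSum

variable {M : Type*} [AddCommMonoid M]

def toeplitzSum (f : ℕ → M) (m₁ m₂ : ℕ) : M :=
  ∑ k ∈ range m₁, ∑ ℓ ∈ range m₂, f ((k : ℤ) - ℓ).natAbs

theorem toeplitzSum_comm (f : ℕ → M) (m₁ m₂ : ℕ) :
    toeplitzSum f m₁ m₂ = toeplitzSum f m₂ m₁ := by
  rw [toeplitzSum, sum_comm]
  exact sum_congr rfl fun k _ => sum_congr rfl fun ℓ _ => congrArg f (by omega)

theorem toeplitzSum_min_max (f : ℕ → M) (m₁ m₂ : ℕ) :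
    toeplitzSum f m₁ m₂ = toeplitzSum f (min m₁ m₂) (max m₁ m₂) := by
  rcases le_total m₁ m₂ with h | h
  · rw [min_eq_left h, max_eq_right h]
  · rw [min_eq_right h, max_eq_left h, toeplitzSum_comm]

theorem toeplitzSum_eq_sum_Icc (f : ℕ → M) (m₁ m₂ : ℕ) :
    toeplitzSum f m₁ m₂ = ∑ k ∈ Icc 1 m₁, ∑ ℓ ∈ Icc 1 m₂, f ((k : ℤ) - ℓ).natAbs := by
  have shift (m : ℕ) (g : ℕ → M) : ∑ i ∈ Icc 1 m, g i = ∑ i ∈ range m, g (i + 1) := by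
    rw [range_eq_Ico, sum_Ico_add' g 0 m 1, zero_add, Ico_add_one_right_eq_Icc]
  simp_rw [shift, toeplitzSum]
  push_cast
  simp_rw [add_sub_add_right_eq_sub]

theorem sum_range_natAbs_sub_add (f : ℕ → M) {k m : ℕ} (hk : k < m) :
    ∑ ℓ ∈ range m, f ((k : ℤ) - ℓ).natAbs + f 0 =
      ∑ j ∈ range (k + 1), f j + ∑ j ∈ range (m - k), f j := by
  have left : ∑ ℓ ∈ range (k + 1), f ((k : ℤ) - ℓ).natAbs = ∑ j ∈ range (k + 1), f j := by
    rw [← sum_range_reflect]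
    exact sum_congr rfl fun ℓ hℓ => congrArg f (by simp only [mem_range] at hℓ; omega)
  have right : ∑ ℓ ∈ Ico (k + 1) m, f ((k : ℤ) - ℓ).natAbs + f 0 =
      ∑ j ∈ range (m - k), f j := by
    rw [sum_Ico_eq_sum_range, show m - k = m - (k + 1) + 1 by omega, sum_range_succ']
    exact congrArg (· + f 0) (sum_congr rfl fun i _ => congrArg f (by omega))
  rw [← sum_range_add_sum_Ico _ hk, left, add_assoc, right]

end ToeplitzSum

theorem toeplitzSum_le_of_le {f : ℕ → ℝ} (hf : ∀ j, 0 ≤ f j) {m₁ m₂ : ℕ} (h : m₁ ≤ m₂) :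
    toeplitzSum f m₁ m₂ ≤ 2 * m₁ * ∑ j ∈ range m₂, f j := by
  have partial_le {n : ℕ} (hn : n ≤ m₂) : ∑ j ∈ range n, f j ≤ ∑ j ∈ range m₂, f j :=
    sum_le_sum_of_subset_of_nonneg (range_subset_range.2 hn) fun j _ _ => hf j
  have row_le (k : ℕ) (hk : k ∈ range m₁) :
      ∑ ℓ ∈ range m₂, f ((k : ℤ) - ℓ).natAbs ≤ 2 * ∑ j ∈ range m₂, f j := by
    have hk : k < m₂ := (mem_range.1 hk).trans_le h
    linarith [sum_range_natAbs_sub_add f hk, partial_le (n := k + 1) hk,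
      partial_le (Nat.sub_le m₂ k), hf 0]
  calc toeplitzSum f m₁ m₂ ≤ ∑ _k ∈ range m₁, 2 * ∑ j ∈ range m₂, f j := sum_le_sum row_le
    _ = 2 * m₁ * ∑ j ∈ range m₂, f j := by rw [sum_const, card_range, nsmul_eq_mul]; ring

theorem le_toeplitzSum_of_le {f : ℕ → ℝ} (hf : ∀ j, 0 ≤ f j) {m₁ m₂ : ℕ} (h : m₁ ≤ m₂) :
    2 * ∑ k ∈ range m₁, ∑ j ∈ range (k + 1), f j - m₁ * f 0 ≤ toeplitzSum f m₁ m₂ := by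
  have row_ge (k : ℕ) (hk : k ∈ range m₁) :
      ∑ j ∈ range (k + 1), f j + ∑ j ∈ range (m₁ - k), f j - f 0 ≤
        ∑ ℓ ∈ range m₂, f ((k : ℤ) - ℓ).natAbs := by
    have hk : k < m₁ := mem_range.1 hk
    have : ∑ j ∈ range (m₁ - k), f j ≤ ∑ j ∈ range (m₂ - k), f j :=
      sum_le_sum_of_subset_of_nonneg (range_subset_range.2 (by omega)) fun j _ _ => hf j
    linarith [sum_range_natAbs_sub_add f (hk.trans_le h)]
  have reflect : ∑ k ∈ range m₁, ∑ j ∈ range (m₁ - k), f j =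
      ∑ k ∈ range m₁, ∑ j ∈ range (k + 1), f j := by
    rw [← sum_range_reflect]
    exact sum_congr rfl fun k hk => by rw [show m₁ - (m₁ - 1 - k) = k + 1 by simp at hk; omega]
  calc 2 * ∑ k ∈ range m₁, ∑ j ∈ range (k + 1), f j - m₁ * f 0
      = ∑ k ∈ range m₁, (∑ j ∈ range (k + 1), f j + ∑ j ∈ range (m₁ - k), f j - f 0) := by
        rw [sum_sub_distrib, sum_add_distrib, reflect, sum_const, card_range, nsmul_eq_mul]; ring
    _ ≤ toeplitzSum f m₁ m₂ := sum_le_sum row_ge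

theorem abs_toeplitzSum_le (f : ℕ → ℝ) (m₁ m₂ : ℕ) :
    |toeplitzSum f m₁ m₂| ≤ toeplitzSum (fun j => |f j|) m₁ m₂ :=
  (abs_sum_le_sum_abs _ _).trans (sum_le_sum fun _ _ => abs_sum_le_sum_abs _ _)

theorem toeplitzSum_const_mul_add (f g : ℕ → ℝ) (c : ℝ) (m₁ m₂ : ℕ) :
    toeplitzSum (fun j => c * f j + g j) m₁ m₂ =
      c * toeplitzSum f m₁ m₂ + toeplitzSum g m₁ m₂ := by
  simp only [toeplitzSum, sum_add_distrib, mul_sum]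

theorem sum_range_one_div_succ (n : ℕ) : ∑ i ∈ range n, 1 / ((i : ℝ) + 1) = harmonic n := by
  simp [harmonic]

theorem mul_log_sub_le_sum_range_log_succ (p : ℕ) :
    p * Real.log p - p ≤ ∑ k ∈ range p, Real.log (k + 1) := by
  rcases Nat.eq_zero_or_pos p with rfl | hp
  · simp
  have log_factorial : ∑ k ∈ range p, Real.log (k + 1) = Real.log p.factorial := by
    rw [← Real.log_prod fun k _ => by positivity, ← prod_range_add_one_eq_factorial]
    push_cast; rfl
  have := Stirling.le_log_factorial_stirling hp.ne'
  have : 0 ≤ Real.log p := Real.log_natCast_nonneg p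
  have : 0 ≤ Real.log (2 * Real.pi) := Real.log_nonneg (by linarith [Real.pi_gt_three])
  linarith

theorem le_toeplitzSum_one_div_succ {m₁ m₂ : ℕ} (h : m₁ ≤ m₂) :
    2 * (m₁ * Real.log m₁) - 3 * m₁ ≤ toeplitzSum (fun j => 1 / ((j : ℝ) + 1)) m₁ m₂ := by
  have row (k : ℕ) : Real.log (k + 1) ≤ ∑ j ∈ range (k + 1), 1 / ((j : ℝ) + 1) := by
    rw [sum_range_one_div_succ]
    refine le_trans (Real.log_le_log (by positivity) ?_) (log_add_one_le_harmonic (k + 1))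
    push_cast; linarith
  have hT := le_toeplitzSum_of_le (f := fun j : ℕ => 1 / ((j : ℝ) + 1)) (fun j => by positivity) h
  simp only [Nat.cast_zero, zero_add, div_one, mul_one] at hT
  linarith [mul_log_sub_le_sum_range_log_succ m₁, sum_le_sum fun k (_ : k ∈ range m₁) => row k]

theorem tendsto_log_natCast_atTop : Tendsto (fun n : ℕ => Real.log n) atTop atTop :=
  Real.tendsto_log_atTop.comp tendsto_natCast_atTop_atTop

section SequenceAsymptotics

variable {m : ℕ → ℕ} {t : ℝ}

theorem tendsto_log_div_log_of_tendsto_div (ht : 0 < t)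
    (h : Tendsto (fun n => (m n : ℝ) / n) atTop (𝓝 t)) :
    Tendsto (fun n => Real.log (m n) / Real.log n) atTop (𝓝 1) := by
  have key : Tendsto (fun n => 1 + Real.log ((m n : ℝ) / n) / Real.log n) atTop (𝓝 (1 + 0)) :=
    tendsto_const_nhds.add
      (((Real.continuousAt_log ht.ne').tendsto.comp h).div_atTop tendsto_log_natCast_atTop)
  rw [add_zero] at key
  refine key.congr' ?_
  filter_upwards [h.eventually (lt_mem_nhds ht), eventually_ge_atTop 2] with n hmn hn
  have hn : (1 : ℝ) < n := by exact_mod_cast hn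
  have hm : (m n : ℝ) ≠ 0 := fun h0 => by simp [h0] at hmn
  rw [Real.log_div hm (by positivity)]
  field_simp [(Real.log_pos hn).ne']
  ring

theorem tendsto_atTop_of_tendsto_div (ht : 0 < t)
    (h : Tendsto (fun n => (m n : ℝ) / n) atTop (𝓝 t)) : Tendsto m atTop atTop := by
  rw [← tendsto_natCast_atTop_iff (R := ℝ)]
  refine (h.pos_mul_atTop ht tendsto_natCast_atTop_atTop).congr' ?_
  filter_upwards [eventually_ne_atTop 0] with n hn
  field_simp

theorem tendsto_harmonic_div_log_of_tendsto_div (ht : 0 < t)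
    (h : Tendsto (fun n => (m n : ℝ) / n) atTop (𝓝 t)) :
    Tendsto (fun n => (harmonic (m n) : ℝ) / Real.log n) atTop (𝓝 1) := by
  have h_succ : Tendsto (fun n => ((m n + 1 : ℕ) : ℝ) / n) atTop (𝓝 t) := by
    simpa [add_div] using h.add tendsto_one_div_atTop_nhds_zero_nat
  have upper : Tendsto (fun n => (1 + Real.log (m n)) / Real.log n) atTop (𝓝 (0 + 1)) := by
    simpa [add_div] using
      ((tendsto_const_nhds (x := (1 : ℝ))).div_atTop tendsto_log_natCast_atTop).add
        (tendsto_log_div_log_of_tendsto_div ht h)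
  rw [zero_add] at upper
  refine tendsto_of_tendsto_of_tendsto_of_le_of_le'
    (tendsto_log_div_log_of_tendsto_div ht h_succ) upper ?_ ?_ <;>
  filter_upwards [eventually_ge_atTop 2] with n hn <;>
  have hn : 0 < Real.log n := Real.log_pos (by exact_mod_cast hn)
  · exact div_le_div_of_nonneg_right (log_add_one_le_harmonic _) hn.le
  · exact div_le_div_of_nonneg_right (harmonic_le_one_add_log _) hn.le

end SequenceAsymptotics

section TendstoToeplitzSum

variable {m₁ m₂ : ℕ → ℕ} {t₁ t₂ : ℝ}

theorem tendsto_min_div (h₁ : Tendsto (fun n => (m₁ n : ℝ) / n) atTop (𝓝 t₁))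
    (h₂ : Tendsto (fun n => (m₂ n : ℝ) / n) atTop (𝓝 t₂)) :
    Tendsto (fun n => (min (m₁ n) (m₂ n) : ℕ) / (n : ℝ)) atTop (𝓝 (min t₁ t₂)) := by
  simpa [min_div_div_right] using h₁.min h₂

theorem tendsto_max_div (h₁ : Tendsto (fun n => (m₁ n : ℝ) / n) atTop (𝓝 t₁))
    (h₂ : Tendsto (fun n => (m₂ n : ℝ) / n) atTop (𝓝 t₂)) :
    Tendsto (fun n => (max (m₁ n) (m₂ n) : ℕ) / (n : ℝ)) atTop (𝓝 (max t₁ t₂)) := by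
  simpa [max_div_div_right] using h₁.max h₂

theorem tendsto_toeplitzSum_one_div_succ (ht₁ : 0 < t₁) (ht₂ : 0 < t₂)
    (h₁ : Tendsto (fun n => (m₁ n : ℝ) / n) atTop (𝓝 t₁))
    (h₂ : Tendsto (fun n => (m₂ n : ℝ) / n) atTop (𝓝 t₂)) :
    Tendsto (fun n => toeplitzSum (fun j => 1 / ((j : ℝ) + 1)) (m₁ n) (m₂ n) / (n * Real.log n))
      atTop (𝓝 (2 * min t₁ t₂)) := by
  set p := fun n => min (m₁ n) (m₂ n)
  set P := fun n => max (m₁ n) (m₂ n)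
  have hp : Tendsto (fun n => (p n : ℝ) / n) atTop (𝓝 (min t₁ t₂)) := tendsto_min_div h₁ h₂
  have hP : Tendsto (fun n => (P n : ℝ) / n) atTop (𝓝 (max t₁ t₂)) := tendsto_max_div h₁ h₂
  have hpos : 0 < min t₁ t₂ := lt_min ht₁ ht₂
  have lower := ((hp.const_mul 2).mul (tendsto_log_div_log_of_tendsto_div hpos hp)).sub
    ((hp.const_mul 3).mul (tendsto_const_nhds (x := (1 : ℝ)).div_atTop tendsto_log_natCast_atTop))
  have upper := (hp.const_mul 2).mul
    (tendsto_harmonic_div_log_of_tendsto_div (hpos.trans_le min_le_max) hP)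
  rw [mul_one, mul_zero, sub_zero] at lower
  rw [mul_one] at upper
  refine tendsto_of_tendsto_of_tendsto_of_le_of_le' lower upper ?_ ?_ <;>
  filter_upwards [eventually_ge_atTop 2] with n hn <;>
  have hS : 0 < (n : ℝ) * Real.log n :=
    mul_pos (by positivity) (Real.log_pos (by exact_mod_cast hn))
  · have := le_toeplitzSum_one_div_succ (min_le_max (a := m₁ n) (b := m₂ n))
    rw [← toeplitzSum_min_max] at this
    calc _ = (2 * (p n * Real.log (p n)) - 3 * p n) / (n * Real.log n) := by field_simp
      _ ≤ _ := by gcongr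
  · have := toeplitzSum_le_of_le (f := fun j : ℕ => 1 / ((j : ℝ) + 1)) (fun j => by positivity)
      (min_le_max (a := m₁ n) (b := m₂ n))
    rw [← toeplitzSum_min_max, sum_range_one_div_succ] at this
    calc _ ≤ 2 * p n * harmonic (P n) / (n * Real.log n) := by gcongr
      _ = _ := by field_simp

theorem tendsto_toeplitzSum_div_of_isLittleO {e : ℕ → ℝ}
    (he : e =o[atTop] fun j => 1 / ((j : ℝ) + 1)) (ht : 0 < max t₁ t₂)
    (h₁ : Tendsto (fun n => (m₁ n : ℝ) / n) atTop (𝓝 t₁))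
    (h₂ : Tendsto (fun n => (m₂ n : ℝ) / n) atTop (𝓝 t₂)) :
    Tendsto (fun n => toeplitzSum e (m₁ n) (m₂ n) / (n * Real.log n)) atTop (𝓝 0) := by
  set p := fun n => min (m₁ n) (m₂ n)
  set P := fun n => max (m₁ n) (m₂ n)
  have hp : Tendsto (fun n => (p n : ℝ) / n) atTop (𝓝 (min t₁ t₂)) := tendsto_min_div h₁ h₂
  have hP : Tendsto (fun n => (P n : ℝ) / n) atTop (𝓝 (max t₁ t₂)) := tendsto_max_div h₁ h₂
  -- the partial sums of `|e|` are `o` of those of `1 / (j + 1)`, which grow like `log`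
  have hE : (fun n => ∑ j ∈ range (P n), |e j|) =o[atTop] fun n => Real.log n := by
    have hsum := (he.norm_left.sum_range (fun j => by positivity)
      Real.tendsto_sum_range_one_div_nat_succ_atTop).comp_tendsto
      (tendsto_atTop_of_tendsto_div ht hP)
    refine hsum.trans_isBigO (isBigO_of_div_tendsto_nhds ?_ 1 ?_)
    · filter_upwards [eventually_ge_atTop 2] with n hn h0
      exact absurd h0 (Real.log_pos (by exact_mod_cast hn)).ne'
    · refine (tendsto_harmonic_div_log_of_tendsto_div ht hP).congr fun n => ?_
      simp only [Pi.div_apply, Function.comp_apply, sum_range_one_div_succ]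
  have bound := (hp.const_mul 2).mul hE.tendsto_div_nhds_zero
  rw [mul_zero] at bound
  refine squeeze_zero_norm' ?_ bound
  filter_upwards [eventually_ge_atTop 2] with n hn
  have hS : 0 < (n : ℝ) * Real.log n :=
    mul_pos (by positivity) (Real.log_pos (by exact_mod_cast hn))
  have hT : |toeplitzSum e (m₁ n) (m₂ n)| ≤ 2 * p n * ∑ j ∈ range (P n), |e j| := by
    refine (abs_toeplitzSum_le e _ _).trans ?_
    rw [toeplitzSum_min_max]
    exact toeplitzSum_le_of_le (fun j => abs_nonneg (e j)) min_le_max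
  rw [Real.norm_eq_abs, abs_div, abs_of_pos hS]
  calc _ ≤ (2 * p n * ∑ j ∈ range (P n), |e j|) / (n * Real.log n) := by gcongr
    _ = _ := by field_simp

theorem tendsto_toeplitzSum_div {c : ℕ → ℝ} {L : ℝ}
    (hc : Tendsto (fun j => (j + 1) * c j) atTop (𝓝 L)) (ht₁ : 0 < t₁) (ht₂ : 0 < t₂)
    (h₁ : Tendsto (fun n => (m₁ n : ℝ) / n) atTop (𝓝 t₁))
    (h₂ : Tendsto (fun n => (m₂ n : ℝ) / n) atTop (𝓝 t₂)) :
    Tendsto (fun n => toeplitzSum c (m₁ n) (m₂ n) / (n * Real.log n)) atTop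
      (𝓝 (2 * L * min t₁ t₂)) := by
  set e := fun j => c j - L * (1 / ((j : ℝ) + 1))
  have he : e =o[atTop] fun j => 1 / ((j : ℝ) + 1) := by
    rw [isLittleO_iff_tendsto' (Eventually.of_forall fun j h => absurd h (by positivity))]
    have := hc.sub_const L
    rw [sub_self] at this
    refine this.congr fun j => ?_
    simp only [e]
    field_simp
  have hsplit (n : ℕ) : toeplitzSum c (m₁ n) (m₂ n) / (n * Real.log n) =
      L * (toeplitzSum (fun j => 1 / ((j : ℝ) + 1)) (m₁ n) (m₂ n) / (n * Real.log n)) +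
        toeplitzSum e (m₁ n) (m₂ n) / (n * Real.log n) := by
    rw [mul_div_assoc', ← add_div, ← toeplitzSum_const_mul_add]
    simp [e]
  have := ((tendsto_toeplitzSum_one_div_succ ht₁ ht₂ h₁ h₂).const_mul L).add
    (tendsto_toeplitzSum_div_of_isLittleO he (ht₁.trans_le (le_max_left _ _)) h₁ h₂)
  rw [add_zero, ← mul_assoc, mul_comm L] at this
  exact this.congr fun n => (hsplit n).symm

end TendstoToeplitzSum

theorem integral_Ico_zero_one_pow (j : ℕ) : ∫ a in Set.Ico (0 : ℝ) 1, a ^ j = 1 / (j + 1) := by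
  rw [← integral_Icc_eq_integral_Ico, integral_Icc_eq_integral_Ioc,
    ← intervalIntegral.integral_of_le zero_le_one, integral_pow]
  simp

theorem integrableOn_Ico_zero_one_pow (j : ℕ) :
    IntegrableOn (fun a : ℝ => a ^ j) (Set.Ico 0 1) :=
  (continuous_pow j).integrableOn_Icc.mono_set Set.Ico_subset_Icc_self

namespace MeasureTheory.IntegrableOn

theorem inv_one_add_mul {ψ : ℝ → ℝ} (hψ : IntegrableOn ψ (Set.Ico 0 1)) :
    IntegrableOn (fun a => (1 + a)⁻¹ * ψ a) (Set.Ico 0 1) :=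
  hψ.continuousOn_mul_of_subset (by fun_prop (disch := intro a ha; linarith [ha.1]))
    isCompact_Icc measurableSet_Ico Set.Ico_subset_Icc_self

theorem pow_mul_Ico {g : ℝ → ℝ} (hg : IntegrableOn g (Set.Ico 0 1)) (j : ℕ) :
    IntegrableOn (fun a => a ^ j * g a) (Set.Ico 0 1) :=
  hg.continuousOn_mul_of_subset (continuous_pow j).continuousOn isCompact_Icc measurableSet_Ico
    Set.Ico_subset_Icc_self

end MeasureTheory.IntegrableOn

theorem abs_integral_pow_mul_sub_le {g : ℝ → ℝ} {L q ε : ℝ} (hg : IntegrableOn g (Set.Ico 0 1))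
    (hq : 0 ≤ q) (hε : 0 ≤ ε) (hgL : ∀ a ∈ Set.Ico q 1, |g a - L| ≤ ε) (j : ℕ) :
    |∫ a in Set.Ico 0 1, a ^ j * (g a - L)| ≤
      (∫ a in Set.Ico 0 1, |g a - L|) * q ^ j + ε * (1 / (j + 1)) := by
  have hgL_int : IntegrableOn (fun a => g a - L) (Set.Ico 0 1) :=
    hg.sub (integrableOn_const (by simp))
  have hpow_int := integrableOn_Ico_zero_one_pow j
  -- below `q` use `a ^ j ≤ q ^ j`, above it use `|g a - L| ≤ ε`
  have pointwise : ∀ a ∈ Set.Ico (0 : ℝ) 1,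
      |a ^ j * (g a - L)| ≤ q ^ j * |g a - L| + ε * a ^ j := by
    rintro a ⟨ha₀, ha₁⟩
    rw [abs_mul, abs_of_nonneg (pow_nonneg ha₀ j)]
    rcases lt_or_ge a q with haq | haq
    · exact le_add_of_le_of_nonneg (by gcongr) (by positivity)
    · refine le_add_of_nonneg_of_le (mul_nonneg (pow_nonneg hq j) (abs_nonneg _)) ?_
      rw [mul_comm ε]
      exact mul_le_mul_of_nonneg_left (hgL a ⟨haq, ha₁⟩) (pow_nonneg ha₀ j)
  calc |∫ a in Set.Ico 0 1, a ^ j * (g a - L)|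
      ≤ ∫ a in Set.Ico 0 1, |a ^ j * (g a - L)| := abs_integral_le_integral_abs
    _ ≤ ∫ a in Set.Ico 0 1, (q ^ j * |g a - L| + ε * a ^ j) :=
        setIntegral_mono_on (hgL_int.pow_mul_Ico j).abs
          ((hgL_int.abs.const_mul _).add (hpow_int.const_mul _)) measurableSet_Ico pointwise
    _ = _ := by
        rw [integral_add (hgL_int.abs.const_mul _) (hpow_int.const_mul _), integral_const_mul,
          integral_const_mul, integral_Ico_zero_one_pow, mul_comm (q ^ j)]

theorem tendsto_succ_mul_integral_pow_mul {g : ℝ → ℝ} {L : ℝ}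
    (hg : IntegrableOn g (Set.Ico 0 1)) (hlim : Tendsto g (𝓝[<] 1) (𝓝 L)) :
    Tendsto (fun j : ℕ => (j + 1) * ∫ a in Set.Ico 0 1, a ^ j * g a) atTop (𝓝 L) := by
  have hsub (j : ℕ) : (j + 1) * ∫ a in Set.Ico 0 1, a ^ j * g a =
      L + (j + 1) * ∫ a in Set.Ico 0 1, a ^ j * (g a - L) := by
    simp_rw [mul_sub]
    rw [integral_sub (hg.pow_mul_Ico j) ((integrableOn_Ico_zero_one_pow j).mul_const L),
      integral_mul_const, integral_Ico_zero_one_pow]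
    field_simp
    ring
  simp_rw [hsub]
  rw [Metric.tendsto_nhds]
  intro ε hε
  obtain ⟨q₀, hq₀, hq₀s⟩ := mem_nhdsLT_iff_exists_Ico_subset.1
    (hlim (Metric.closedBall_mem_nhds L (half_pos hε)))
  set q := max q₀ 0
  have hq : q < 1 := max_lt hq₀ zero_lt_one
  have hgL : ∀ a ∈ Set.Ico q 1, |g a - L| ≤ ε / 2 := fun a ha =>
    hq₀s (Set.Ico_subset_Ico_left (le_max_left _ _) ha)
  set K := ∫ a in Set.Ico 0 1, |g a - L|
  have hgeom : Tendsto (fun j : ℕ => K * ((j + 1) * q ^ j)) atTop (𝓝 (K * 0)) := by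
    refine tendsto_const_nhds.mul ?_
    simpa [add_mul] using (tendsto_self_mul_const_pow_of_lt_one (le_max_right _ _) hq).add
      (tendsto_pow_atTop_nhds_zero_of_lt_one (le_max_right _ _) hq)
  rw [mul_zero] at hgeom
  filter_upwards [hgeom.eventually (gt_mem_nhds (half_pos hε))] with j hj
  have := abs_integral_pow_mul_sub_le hg (le_max_right _ _) (half_pos hε).le hgL j
  rw [Real.dist_eq, add_sub_cancel_left, abs_mul, abs_of_pos (by positivity : (0 : ℝ) < j + 1)]
  calc (j + 1) * |∫ a in Set.Ico 0 1, a ^ j * (g a - L)|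
      ≤ (j + 1) * (K * q ^ j + ε / 2 * (1 / (j + 1))) := by gcongr
    _ = K * ((j + 1) * q ^ j) + ε / 2 := by field_simp
    _ < ε := by linarith

theorem integral_Icc_sum_sum_eq_toeplitzSum {ψ : ℝ → ℝ} (hψ : IntegrableOn ψ (Set.Ico 0 1))
    (m₁ m₂ : ℕ) :
    ∫ a in Set.Icc (0 : ℝ) 1, ∑ k ∈ Icc 1 m₁, ∑ ℓ ∈ Icc 1 m₂,
        a ^ ((k : ℤ) - ℓ).natAbs / (1 - a ^ 2) * (ψ a * (1 - a)) =
      toeplitzSum (fun j => ∫ a in Set.Ico 0 1, a ^ j * ((1 + a)⁻¹ * ψ a)) m₁ m₂ := by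
  have hterm (j : ℕ) := hψ.inv_one_add_mul.pow_mul_Ico j
  rw [integral_Icc_eq_integral_Ico, toeplitzSum_eq_sum_Icc,
    setIntegral_congr_fun measurableSet_Ico fun a ha => sum_congr rfl fun k _ =>
      sum_congr rfl fun ℓ _ => ?_]
  · rw [integral_finsetSum _ fun k _ => integrable_finsetSum _ fun ℓ _ => hterm _]
    exact sum_congr rfl fun k _ => integral_finsetSum _ fun ℓ _ => hterm _
  · have h₁ : 1 - a ≠ 0 := by linarith [ha.2]
    have h₂ : 1 + a ≠ 0 := by linarith [ha.1]
    rw [show 1 - a ^ 2 = (1 - a) * (1 + a) by ring]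
    field_simp

theorem AR_integral_double_sum_limit_general (ψ : ℝ → ℝ) (ψ₁ : ℝ)
    (hint : IntegrableOn ψ (Set.Ico (0 : ℝ) 1))
    (hlim : Tendsto ψ (nhdsWithin 1 (Set.Iio 1)) (nhds ψ₁))
    (σ : ℝ)
    (t₁ t₂ : ℝ) (ht₁ : 0 < t₁) (ht₂ : 0 < t₂) :
    Tendsto (fun n : ℕ =>
      (σ ^ 2 / (n * Real.log n)) *
        ∫ a in Set.Icc (0 : ℝ) 1,
          ∑ k ∈ Finset.Icc 1 ⌊(n : ℝ) * t₁⌋₊, ∑ ℓ ∈ Finset.Icc 1 ⌊(n : ℝ) * t₂⌋₊,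
            a ^ (((k : ℤ) - ℓ).natAbs) / (1 - a ^ 2) * (ψ a * (1 - a)))
      atTop (nhds (σ ^ 2 * ψ₁ * min t₁ t₂)) := by
  have hg : Tendsto (fun a => (1 + a)⁻¹ * ψ a) (𝓝[<] 1) (𝓝 (2⁻¹ * ψ₁)) := by
    have : Tendsto (fun a : ℝ => (1 + a)⁻¹) (𝓝 1) (𝓝 (1 + 1)⁻¹) :=
      (tendsto_const_nhds.add tendsto_id).inv₀ (by norm_num)
    rw [one_add_one_eq_two] at this
    exact (this.mono_left nhdsWithin_le_nhds).mul hlim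
  have hfloor (t : ℝ) (ht : 0 < t) :
      Tendsto (fun n : ℕ => (⌊(n : ℝ) * t⌋₊ : ℝ) / n) atTop (𝓝 t) := by
    simpa [Function.comp_def, mul_comm] using
      (tendsto_nat_floor_mul_div_atTop ht.le).comp tendsto_natCast_atTop_atTop
  have := (tendsto_toeplitzSum_div (tendsto_succ_mul_integral_pow_mul hint.inv_one_add_mul hg)
    ht₁ ht₂ (hfloor t₁ ht₁) (hfloor t₂ ht₂)).const_mul (σ ^ 2)
  convert this using 2 with n
  · rw [integral_Icc_sum_sum_eq_toeplitzSum hint]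
    ring
  · ring

theorem AR_integral_double_sum_limit (ψ : ℝ → ℝ) (ψ₁ : ℝ) (hψ₁ : 0 < ψ₁)
    (hnonneg : ∀ x ∈ Set.Ico (0 : ℝ) 1, 0 ≤ ψ x)
    (hint : IntegrableOn ψ (Set.Ico (0 : ℝ) 1))
    (hlim : Tendsto ψ (nhdsWithin 1 (Set.Iio 1)) (nhds ψ₁))
    (σ : ℝ) (hσ : 0 < σ)
    (t₁ t₂ : ℝ) (ht₁ : 0 < t₁) (ht₂ : 0 < t₂) :
    Tendsto (fun n : ℕ =>
      (σ ^ 2 / (n * Real.log n)) *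
        ∫ a in Set.Icc (0 : ℝ) 1,
          ∑ k ∈ Finset.Icc 1 ⌊(n : ℝ) * t₁⌋₊, ∑ ℓ ∈ Finset.Icc 1 ⌊(n : ℝ) * t₂⌋₊,
            a ^ (((k : ℤ) - ℓ).natAbs) / (1 - a ^ 2) * (ψ a * (1 - a)))
      atTop (nhds (σ ^ 2 * ψ₁ * min t₁ t₂)) :=
  AR_integral_double_sum_limit_general ψ ψ₁ hint hlim σ t₁ t₂ ht₁ ht₂
end
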